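/- Let δ ∈ (0,1) and s > 1/2 be real; set η = 1/2 + δ and η' = s + 1 − δ, and assume η < 3/2, η' < 3/2, and η + η' = s + 3/2 > 0. Then there is a constant C = C(s,δ) > 0 such that for all f, g ∈ Ḣ^{η}(ℝ³) ∩ Ḣ^{η'}(ℝ³), the product fg lies in Ḣˢ(ℝ³) and ‖fg‖_{Ḣˢ} ≤ C (‖f‖_{Ḣ^{η}} ‖g‖_{Ḣ^{η'}} + ‖f‖_{Ḣ^{η'}} ‖g‖_{Ḣ^{η}}). -/

import Mathlib

open MeasureTheory ENNReal Metric Set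

noncomputable section CheminAux

local notation "E3" => EuclideanSpace ℝ (Fin 3)

lemma chemin_finrank3 : Module.finrank ℝ (EuclideanSpace ℝ (Fin 3)) = 3 := by
  simp [finrank_euclideanSpace]

lemma chemin_ball_lt_top (α : ℝ) (hα0 : 0 < α) (hα : α < 3) :
    ∫⁻ χ : E3 in ball 0 1, ENNReal.ofReal (‖χ‖ ^ (-α)) < ∞ := by
  set V : ℝ≥0∞ := volume (ball (0:E3) 1) with hV
  have hVlt : V < ∞ := measure_ball_lt_top
  set A : ℕ → Set E3 := fun n => {χ | (2:ℝ) ^ (-(n+1:ℝ)) < ‖χ‖ ∧ ‖χ‖ ≤ (2:ℝ) ^ (-(n:ℝ))} with hA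
  have hsub : ball (0:E3) 1 ⊆ {0} ∪ ⋃ n, A n := by
    intro χ hχ
    by_cases h0 : χ = 0
    · exact Or.inl h0
    · right
      have hr0 : 0 < ‖χ‖ := norm_pos_iff.2 h0
      have hr1 : ‖χ‖ < 1 := by simpa using hχ
      have key : ∀ n : ℕ, (2:ℝ) ^ (-(n:ℝ)) = ((1:ℝ)/2) ^ n := by
        intro n
        rw [Real.rpow_neg (by norm_num), Real.rpow_natCast, one_div, inv_pow]
      have hex : ∃ n : ℕ, (2:ℝ) ^ (-(n+1:ℝ)) < ‖χ‖ := by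
        obtain ⟨n, hn⟩ := exists_pow_lt_of_lt_one hr0 (by norm_num : (1:ℝ)/2 < 1)
        refine ⟨n, ?_⟩
        have : (-(n+1:ℝ)) = (-((n+1:ℕ):ℝ)) := by push_cast; ring
        rw [this, key (n+1)]
        refine lt_of_le_of_lt ?_ hn
        apply pow_le_pow_of_le_one (by norm_num) (by norm_num) (Nat.le_succ n)
      classical
      set n := Nat.find hex with hn
      refine mem_iUnion.2 ⟨n, Nat.find_spec hex, ?_⟩
      rcases Nat.eq_zero_or_pos n with h | h
      · rw [h]
        simpa using hr1.le
      · have := Nat.find_min hex (m := n - 1) (by omega)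
        push_neg at this
        calc ‖χ‖ ≤ (2:ℝ) ^ (-((n-1:ℕ)+1:ℝ)) := this
        _ = (2:ℝ) ^ (-(n:ℝ)) := by
          congr 1
          have : ((n-1:ℕ):ℝ) = (n:ℝ) - 1 := by
            push_cast [Nat.cast_sub h]; ring
          rw [this]; ring
  have hAmeas : ∀ n, MeasurableSet (A n) := by
    intro n
    have : A n = (fun χ : E3 => ‖χ‖) ⁻¹' (Ioc ((2:ℝ) ^ (-(n+1:ℝ))) ((2:ℝ) ^ (-(n:ℝ)))) := by
      ext χ; simp [hA, Ioc]
    rw [this]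
    exact measurable_norm measurableSet_Ioc
  have hbound : ∀ n, ∫⁻ χ : E3 in A n, ENNReal.ofReal (‖χ‖ ^ (-α)) ≤
      ENNReal.ofReal ((2:ℝ) ^ (α - 3)) ^ n * (ENNReal.ofReal ((2:ℝ) ^ α) * V) := by
    intro n
    have h1 : ∫⁻ χ : E3 in A n, ENNReal.ofReal (‖χ‖ ^ (-α)) ≤
        ∫⁻ _ : E3 in A n, ENNReal.ofReal (((2:ℝ) ^ (-(n+1:ℝ))) ^ (-α)) := by
      refine setLIntegral_mono' (hAmeas n) ?_
      intro χ hχ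
      apply ENNReal.ofReal_le_ofReal
      exact Real.rpow_le_rpow_of_nonpos (Real.rpow_pos_of_pos (by norm_num) _) hχ.1.le
        (by linarith)
    have h2 : volume (A n) ≤ ENNReal.ofReal (((2:ℝ) ^ (-(n:ℝ))) ^ (3:ℕ)) * V := by
      have hball := Measure.addHaar_closedBall (volume : Measure E3) 0
        (Real.rpow_nonneg (by norm_num : (0:ℝ) ≤ 2) (-(n:ℝ)))
      rw [chemin_finrank3] at hball
      calc volume (A n) ≤ volume (closedBall (0:E3) ((2:ℝ) ^ (-(n:ℝ)))) := by
            apply measure_mono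
            intro χ hχ
            simpa [dist_eq_norm] using hχ.2
        _ = ENNReal.ofReal (((2:ℝ) ^ (-(n:ℝ))) ^ (3:ℕ)) * V := hball
    have e1 : ((2:ℝ) ^ (-(n+1:ℝ))) ^ (-α) = (2:ℝ) ^ ((n+1:ℝ)*α) := by
      rw [← Real.rpow_mul (by norm_num : (0:ℝ) ≤ 2)]
      congr 1; ring
    have e2 : (((2:ℝ) ^ (-(n:ℝ))) ^ (3:ℕ)) = (2:ℝ) ^ (-(3*n:ℝ)) := by
      rw [← Real.rpow_natCast ((2:ℝ) ^ (-(n:ℝ))) 3, ← Real.rpow_mul (by norm_num : (0:ℝ) ≤ 2)]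
      congr 1; push_cast; ring
    have e3 : ENNReal.ofReal ((2:ℝ) ^ (α-3)) ^ n = ENNReal.ofReal ((2:ℝ) ^ ((α-3)*(n:ℝ))) := by
      rw [← ENNReal.ofReal_pow (by positivity), ← Real.rpow_natCast ((2:ℝ)^(α-3)) n,
        ← Real.rpow_mul (by norm_num : (0:ℝ) ≤ 2)]
    calc ∫⁻ χ : E3 in A n, ENNReal.ofReal (‖χ‖ ^ (-α))
        ≤ ENNReal.ofReal (((2:ℝ) ^ (-(n+1:ℝ))) ^ (-α)) * volume (A n) := by
          simpa [setLIntegral_const] using h1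
      _ ≤ ENNReal.ofReal (((2:ℝ) ^ (-(n+1:ℝ))) ^ (-α)) *
            (ENNReal.ofReal (((2:ℝ) ^ (-(n:ℝ))) ^ (3:ℕ)) * V) := by gcongr
      _ = ENNReal.ofReal ((2:ℝ) ^ (α - 3)) ^ n * (ENNReal.ofReal ((2:ℝ) ^ α) * V) := by
          rw [e1, e2, e3, ← mul_assoc, ← mul_assoc,
            ← ENNReal.ofReal_mul (by positivity), ← ENNReal.ofReal_mul (by positivity),
            ← Real.rpow_add (by norm_num : (0:ℝ) < 2),
            ← Real.rpow_add (by norm_num : (0:ℝ) < 2)]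
          congr 2; ring
  have hr1 : ENNReal.ofReal ((2:ℝ) ^ (α-3)) < 1 := by
    rw [← ENNReal.ofReal_one]
    exact ENNReal.ofReal_lt_ofReal_iff (by norm_num) |>.2
      (Real.rpow_lt_one_of_one_lt_of_neg (by norm_num) (by linarith))
  calc ∫⁻ χ : E3 in ball 0 1, ENNReal.ofReal (‖χ‖ ^ (-α))
      ≤ ∫⁻ χ : E3 in ({0} ∪ ⋃ n, A n), ENNReal.ofReal (‖χ‖ ^ (-α)) :=
        lintegral_mono_set hsub
    _ ≤ (∫⁻ χ : E3 in ({0}:Set E3), ENNReal.ofReal (‖χ‖ ^ (-α))) +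
          ∫⁻ χ : E3 in (⋃ n, A n), ENNReal.ofReal (‖χ‖ ^ (-α)) := lintegral_union_le _ _ _
    _ ≤ 0 + ∑' n, ∫⁻ χ : E3 in A n, ENNReal.ofReal (‖χ‖ ^ (-α)) := by
        gcongr
        · rw [setLIntegral_measure_zero]
          exact measure_singleton 0
        · exact lintegral_iUnion_le _ _
    _ ≤ 0 + ∑' n, ENNReal.ofReal ((2:ℝ) ^ (α - 3)) ^ n * (ENNReal.ofReal ((2:ℝ) ^ α) * V) := by
        gcongr with n
        exact hbound n
    _ = (1 - ENNReal.ofReal ((2:ℝ) ^ (α-3)))⁻¹ * (ENNReal.ofReal ((2:ℝ) ^ α) * V) := by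
        rw [zero_add, ENNReal.tsum_mul_right, ENNReal.tsum_geometric]
    _ < ∞ := by
        apply ENNReal.mul_lt_top
        · exact ENNReal.inv_lt_top.2 (tsub_pos_of_lt hr1)
        · exact ENNReal.mul_lt_top ENNReal.ofReal_lt_top hVlt

lemma chemin_finrank3' : Module.finrank ℝ (EuclideanSpace ℝ (Fin 3)) = 3 := by
  simp [finrank_euclideanSpace]

lemma chemin_tail_lt_top (γ : ℝ) (hγ : 3 < γ) :
    ∫⁻ χ : E3 in (ball 0 2)ᶜ, ENNReal.ofReal (‖χ‖ ^ (-γ)) < ∞ := by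
  have hpt : ∀ χ : E3, χ ∈ (ball (0:E3) 2)ᶜ →
      ENNReal.ofReal (‖χ‖ ^ (-γ)) ≤
        ENNReal.ofReal ((3/2:ℝ) ^ γ) * ENNReal.ofReal ((1 + ‖χ‖) ^ (-γ)) := by
    intro χ hχ
    have h2 : (2:ℝ) ≤ ‖χ‖ := by simpa [dist_eq_norm] using hχ
    have h0 : (0:ℝ) < ‖χ‖ := by linarith
    rw [← ENNReal.ofReal_mul (by positivity)]
    apply ENNReal.ofReal_le_ofReal
    have key : (1 + ‖χ‖) ≤ (3/2) * ‖χ‖ := by linarith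
    calc ‖χ‖ ^ (-γ) = ((3/2:ℝ) ^ γ * (3/2:ℝ) ^ (-γ)) * ‖χ‖ ^ (-γ) := by
          rw [← Real.rpow_add (by norm_num)]; simp
      _ = (3/2:ℝ) ^ γ * (((3/2:ℝ) * ‖χ‖) ^ (-γ)) := by
          rw [Real.mul_rpow (by positivity) (by positivity)]; ring
      _ ≤ (3/2:ℝ) ^ γ * ((1 + ‖χ‖) ^ (-γ)) :=
          mul_le_mul_of_nonneg_left
            (Real.rpow_le_rpow_of_nonpos (by positivity) key (by linarith)) (by positivity)
  calc ∫⁻ χ : E3 in (ball 0 2)ᶜ, ENNReal.ofReal (‖χ‖ ^ (-γ))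
      ≤ ∫⁻ χ : E3 in (ball 0 2)ᶜ,
          ENNReal.ofReal ((3/2:ℝ) ^ γ) * ENNReal.ofReal ((1 + ‖χ‖) ^ (-γ)) :=
        setLIntegral_mono' (measurableSet_ball).compl hpt
    _ ≤ ∫⁻ χ : E3, ENNReal.ofReal ((3/2:ℝ) ^ γ) * ENNReal.ofReal ((1 + ‖χ‖) ^ (-γ)) := by
        exact setLIntegral_le_lintegral _ _
    _ = ENNReal.ofReal ((3/2:ℝ) ^ γ) * ∫⁻ χ : E3, ENNReal.ofReal ((1 + ‖χ‖) ^ (-γ)) := by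
        rw [lintegral_const_mul' _ _ ENNReal.ofReal_ne_top]
    _ < ∞ := by
        apply ENNReal.mul_lt_top ENNReal.ofReal_lt_top
        apply finite_integral_one_add_norm
        rw [chemin_finrank3']
        exact_mod_cast hγ

lemma chemin_lintegral_neg (f : E3 → ℝ≥0∞) : ∫⁻ x : E3, f (-x) = ∫⁻ x : E3, f x := by
  calc ∫⁻ x : E3, f (-x)
      = ∫⁻ a, f a ∂(Measure.map (MeasurableEquiv.neg E3) volume) :=
        (lintegral_map_equiv f (MeasurableEquiv.neg E3)).symm
    _ = ∫⁻ x, f x := by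
        rw [show ⇑(MeasurableEquiv.neg E3) = (fun x : E3 => -x) from rfl,
          Measure.map_neg_eq_self]

lemma chemin_half_rpow (β : ℝ) : ((1:ℝ)/2) ^ (-β) = (2:ℝ) ^ β := by
  rw [one_div, Real.inv_rpow (by norm_num), Real.rpow_neg (by norm_num), inv_inv]

lemma chemin_unit_bound (α β : ℝ) (hα0 : 0 < α) (hα : α < 3) (hβ0 : 0 < β) (hβ : β < 3)
    (hαβ : 3 < α + β) :
    ∃ C0 : ℝ≥0∞, C0 ≠ ⊤ ∧ ∀ e : E3, ‖e‖ = 1 →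
      ∫⁻ χ : E3, ENNReal.ofReal (‖χ‖ ^ (-α) * ‖e - χ‖ ^ (-β)) ≤ C0 := by
  set Iα : ℝ≥0∞ := ∫⁻ χ : E3 in ball 0 1, ENNReal.ofReal (‖χ‖ ^ (-α)) with hIα
  set Iβ : ℝ≥0∞ := ∫⁻ χ : E3 in ball 0 1, ENNReal.ofReal (‖χ‖ ^ (-β)) with hIβ
  set T : ℝ≥0∞ := ∫⁻ χ : E3 in (ball 0 2)ᶜ, ENNReal.ofReal (‖χ‖ ^ (-(α+β))) with hT
  refine ⟨ENNReal.ofReal ((2:ℝ)^β) * Iα + ENNReal.ofReal ((2:ℝ)^α) * Iβ +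
    ENNReal.ofReal ((2:ℝ)^α * (2:ℝ)^β) * volume (ball (0:E3) 2) +
    ENNReal.ofReal ((2:ℝ)^β) * T, ?_, ?_⟩
  · have h1 := chemin_ball_lt_top α hα0 hα
    have h2 := chemin_ball_lt_top β hβ0 hβ
    have h3 := chemin_tail_lt_top (α+β) hαβ
    rw [← hIα] at h1; rw [← hIβ] at h2; rw [← hT] at h3
    refine ENNReal.add_ne_top.2 ⟨ENNReal.add_ne_top.2 ⟨ENNReal.add_ne_top.2 ⟨?_, ?_⟩, ?_⟩, ?_⟩
    · exact (ENNReal.mul_lt_top ENNReal.ofReal_lt_top h1).ne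
    · exact (ENNReal.mul_lt_top ENNReal.ofReal_lt_top h2).ne
    · exact (ENNReal.mul_lt_top ENNReal.ofReal_lt_top measure_ball_lt_top).ne
    · exact (ENNReal.mul_lt_top ENNReal.ofReal_lt_top h3).ne
  intro e he
  set f : E3 → ℝ≥0∞ := fun χ => ENNReal.ofReal (‖χ‖ ^ (-α) * ‖e - χ‖ ^ (-β)) with hf
  set S1 : Set E3 := ball 0 (1/2)
  set S2 : Set E3 := ball e (1/2)
  set S4 : Set E3 := (ball 0 2)ᶜ
  set S3 : Set E3 := univ \ (S1 ∪ S2 ∪ S4) with hS3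
  have hcover : (univ : Set E3) ⊆ S1 ∪ (S2 ∪ (S3 ∪ S4)) := by
    intro χ _
    by_cases h1 : χ ∈ S1
    · exact Or.inl h1
    by_cases h2 : χ ∈ S2
    · exact Or.inr (Or.inl h2)
    by_cases h4 : χ ∈ S4
    · exact Or.inr (Or.inr (Or.inr h4))
    · exact Or.inr (Or.inr (Or.inl ⟨trivial, by simp [h1, h2, h4]⟩))
  have step : ∫⁻ χ : E3, f χ ≤ (∫⁻ χ : E3 in S1, f χ) + ((∫⁻ χ : E3 in S2, f χ) +
      ((∫⁻ χ : E3 in S3, f χ) + (∫⁻ χ : E3 in S4, f χ))) := by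
    calc ∫⁻ χ : E3, f χ = ∫⁻ χ : E3 in univ, f χ := by rw [setLIntegral_univ]
      _ ≤ ∫⁻ χ : E3 in S1 ∪ (S2 ∪ (S3 ∪ S4)), f χ := lintegral_mono_set hcover
      _ ≤ _ :=
          le_trans (lintegral_union_le _ _ _) (add_le_add_right
            (le_trans (lintegral_union_le _ _ _) (add_le_add_right
              (lintegral_union_le _ _ _) _)) _)
  -- bounds on each region
  have hb1 : ∫⁻ χ : E3 in S1, f χ ≤ ENNReal.ofReal ((2:ℝ)^β) * Iα := by
    have hpt : ∀ χ : E3, χ ∈ S1 →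
        f χ ≤ ENNReal.ofReal ((2:ℝ)^β) * ENNReal.ofReal (‖χ‖ ^ (-α)) := by
      intro χ hχ
      have hχn : ‖χ‖ < 1/2 := by simpa [S1] using hχ
      have hd : (1/2:ℝ) ≤ ‖e - χ‖ := by
        have := norm_sub_norm_le e χ
        rw [he] at this
        calc (1/2:ℝ) = 1 - 1/2 := by norm_num
          _ ≤ 1 - ‖χ‖ := by linarith
          _ ≤ ‖e - χ‖ := by linarith [norm_sub_norm_le e χ, he]
      have : ‖e - χ‖ ^ (-β) ≤ (2:ℝ)^β := by
        rw [← chemin_half_rpow β]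
        exact Real.rpow_le_rpow_of_nonpos (by norm_num) hd (by linarith)
      rw [hf, ← ENNReal.ofReal_mul (by positivity)]
      apply ENNReal.ofReal_le_ofReal
      calc ‖χ‖ ^ (-α) * ‖e - χ‖ ^ (-β) ≤ ‖χ‖ ^ (-α) * (2:ℝ)^β :=
            mul_le_mul_of_nonneg_left this (by positivity)
        _ = (2:ℝ)^β * ‖χ‖ ^ (-α) := by ring
    calc ∫⁻ χ : E3 in S1, f χ
        ≤ ∫⁻ χ : E3 in S1, ENNReal.ofReal ((2:ℝ)^β) * ENNReal.ofReal (‖χ‖ ^ (-α)) :=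
          setLIntegral_mono' measurableSet_ball hpt
      _ = ENNReal.ofReal ((2:ℝ)^β) * ∫⁻ χ : E3 in S1, ENNReal.ofReal (‖χ‖ ^ (-α)) :=
          lintegral_const_mul' _ _ ENNReal.ofReal_ne_top
      _ ≤ ENNReal.ofReal ((2:ℝ)^β) * Iα := by
          gcongr
          rw [hIα]
          exact lintegral_mono_set (ball_subset_ball (by norm_num))
  have hb2 : ∫⁻ χ : E3 in S2, f χ ≤ ENNReal.ofReal ((2:ℝ)^α) * Iβ := by
    have hpt : ∀ χ : E3, χ ∈ S2 →
        f χ ≤ ENNReal.ofReal ((2:ℝ)^α) * ENNReal.ofReal (‖e - χ‖ ^ (-β)) := by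
      intro χ hχ
      have hχn : ‖e - χ‖ < 1/2 := by
        have : dist χ e < 1/2 := by simpa [S2] using hχ
        rw [dist_eq_norm] at this
        rwa [norm_sub_rev]
      have hlow : (1/2:ℝ) ≤ ‖χ‖ := by
        have h'' : ‖e‖ - ‖e - χ‖ ≤ ‖χ‖ := by simpa using norm_sub_norm_le e (e - χ)
        rw [he] at h''
        linarith
      have : ‖χ‖ ^ (-α) ≤ (2:ℝ)^α := by
        rw [← chemin_half_rpow α]
        exact Real.rpow_le_rpow_of_nonpos (by norm_num) hlow (by linarith)
      rw [hf, ← ENNReal.ofReal_mul (by positivity)]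
      apply ENNReal.ofReal_le_ofReal
      exact mul_le_mul_of_nonneg_right this (by positivity)
    have htrans : (∫⁻ χ : E3 in S2, ENNReal.ofReal (‖e - χ‖ ^ (-β))) =
        ∫⁻ y : E3 in ball (0:E3) (1/2), ENNReal.ofReal (‖y‖ ^ (-β)) := by
      have h1 : ∀ χ : E3, (S2.indicator (fun χ => ENNReal.ofReal (‖e - χ‖ ^ (-β)))) χ =
          ((ball (0:E3) (1/2)).indicator (fun y => ENNReal.ofReal (‖y‖ ^ (-β)))) (e - χ) := by
        intro χ
        by_cases h : χ ∈ S2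
        · rw [indicator_of_mem h, indicator_of_mem
            (by simp only [mem_ball, dist_eq_norm, sub_zero, ← norm_sub_rev χ e]
                simpa [S2, mem_ball, dist_eq_norm] using h)]
        · rw [indicator_of_notMem h, indicator_of_notMem
            (by simp only [mem_ball, dist_eq_norm, sub_zero, ← norm_sub_rev χ e]
                simpa [S2, mem_ball, dist_eq_norm] using h)]
      rw [← lintegral_indicator measurableSet_ball _, ← lintegral_indicator measurableSet_ball _,
        lintegral_congr h1]
      simp_rw [show ∀ χ : E3, e - χ = -(χ - e) from fun χ => (neg_sub χ e).symm]
      rw [lintegral_sub_right_eq_self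
        (fun x => (ball (0:E3) (1/2)).indicator (fun y => ENNReal.ofReal (‖y‖ ^ (-β))) (-x)) e]
      exact chemin_lintegral_neg _
    calc ∫⁻ χ : E3 in S2, f χ
        ≤ ∫⁻ χ : E3 in S2, ENNReal.ofReal ((2:ℝ)^α) * ENNReal.ofReal (‖e - χ‖ ^ (-β)) :=
          setLIntegral_mono' measurableSet_ball hpt
      _ = ENNReal.ofReal ((2:ℝ)^α) * ∫⁻ χ : E3 in S2, ENNReal.ofReal (‖e - χ‖ ^ (-β)) :=
          lintegral_const_mul' _ _ ENNReal.ofReal_ne_top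
      _ ≤ ENNReal.ofReal ((2:ℝ)^α) * Iβ := by
          gcongr
          rw [htrans, hIβ]
          exact lintegral_mono_set (ball_subset_ball (by norm_num))
  have hS3meas : MeasurableSet S3 :=
    MeasurableSet.univ.diff ((measurableSet_ball.union measurableSet_ball).union
      measurableSet_ball.compl)
  have hb3 : ∫⁻ χ : E3 in S3, f χ ≤
      ENNReal.ofReal ((2:ℝ)^α * (2:ℝ)^β) * volume (ball (0:E3) 2) := by
    have hpt : ∀ χ : E3, χ ∈ S3 → f χ ≤ ENNReal.ofReal ((2:ℝ)^α * (2:ℝ)^β) := by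
      intro χ hχ
      rw [hS3, mem_diff] at hχ
      obtain ⟨-, hne⟩ := hχ
      simp only [mem_union, not_or] at hne
      obtain ⟨⟨h1, h2⟩, -⟩ := hne
      have hn1 : (1/2:ℝ) ≤ ‖χ‖ := by
        by_contra h
        exact h1 (by simpa [S1, mem_ball, dist_eq_norm] using not_le.1 h)
      have hn2 : (1/2:ℝ) ≤ ‖e - χ‖ := by
        by_contra h
        apply h2
        simp only [S2, mem_ball, dist_eq_norm, ← norm_sub_rev e χ]
        exact not_le.1 h
      have b1 : ‖χ‖ ^ (-α) ≤ (2:ℝ)^α := by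
        rw [← chemin_half_rpow α]
        exact Real.rpow_le_rpow_of_nonpos (by norm_num) hn1 (by linarith)
      have b2 : ‖e - χ‖ ^ (-β) ≤ (2:ℝ)^β := by
        rw [← chemin_half_rpow β]
        exact Real.rpow_le_rpow_of_nonpos (by norm_num) hn2 (by linarith)
      apply ENNReal.ofReal_le_ofReal
      exact mul_le_mul b1 b2 (by positivity) (by positivity)
    calc ∫⁻ χ : E3 in S3, f χ ≤ ∫⁻ _ : E3 in S3, ENNReal.ofReal ((2:ℝ)^α * (2:ℝ)^β) :=
          setLIntegral_mono' hS3meas hpt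
      _ = ENNReal.ofReal ((2:ℝ)^α * (2:ℝ)^β) * volume S3 := setLIntegral_const _ _
      _ ≤ ENNReal.ofReal ((2:ℝ)^α * (2:ℝ)^β) * volume (ball (0:E3) 2) := by
          gcongr
          intro χ hχ
          rw [hS3, mem_diff] at hχ
          simp only [mem_union, not_or] at hχ
          have := hχ.2.2
          simpa [S4] using this
  have hb4 : ∫⁻ χ : E3 in S4, f χ ≤ ENNReal.ofReal ((2:ℝ)^β) * T := by
    have hpt : ∀ χ : E3, χ ∈ S4 →
        f χ ≤ ENNReal.ofReal ((2:ℝ)^β) * ENNReal.ofReal (‖χ‖ ^ (-(α+β))) := by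
      intro χ hχ
      have h2 : (2:ℝ) ≤ ‖χ‖ := by simpa [S4, dist_eq_norm] using hχ
      have h0 : (0:ℝ) < ‖χ‖ := by linarith
      have hd : ‖χ‖/2 ≤ ‖e - χ‖ := by
        have h' : ‖χ‖ ≤ ‖e‖ + ‖e - χ‖ := by
          calc ‖χ‖ = ‖e - (e - χ)‖ := by congr 1; abel
            _ ≤ ‖e‖ + ‖e - χ‖ := norm_sub_le _ _
        rw [he] at h'
        linarith
      have key : ‖e - χ‖ ^ (-β) ≤ (2:ℝ)^β * ‖χ‖ ^ (-β) := by
        have e1 : (‖χ‖/2) ^ (-β) = (2:ℝ)^β * ‖χ‖ ^ (-β) := by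
          rw [div_eq_mul_inv, ← one_div, mul_comm,
            Real.mul_rpow (by norm_num) (by positivity), chemin_half_rpow β]
        rw [← e1]
        exact Real.rpow_le_rpow_of_nonpos (by positivity) hd (by linarith)
      rw [hf, ← ENNReal.ofReal_mul (by positivity)]
      apply ENNReal.ofReal_le_ofReal
      calc ‖χ‖ ^ (-α) * ‖e - χ‖ ^ (-β) ≤ ‖χ‖ ^ (-α) * ((2:ℝ)^β * ‖χ‖ ^ (-β)) :=
            mul_le_mul_of_nonneg_left key (by positivity)
        _ = (2:ℝ)^β * ‖χ‖ ^ (-(α+β)) := by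
            rw [show (-(α+β)) = (-α) + (-β) by ring, Real.rpow_add h0]
            ring
    calc ∫⁻ χ : E3 in S4, f χ
        ≤ ∫⁻ χ : E3 in S4, ENNReal.ofReal ((2:ℝ)^β) * ENNReal.ofReal (‖χ‖ ^ (-(α+β))) :=
          setLIntegral_mono' measurableSet_ball.compl hpt
      _ = ENNReal.ofReal ((2:ℝ)^β) * ∫⁻ χ : E3 in S4, ENNReal.ofReal (‖χ‖ ^ (-(α+β))) :=
          lintegral_const_mul' _ _ ENNReal.ofReal_ne_top
      _ = ENNReal.ofReal ((2:ℝ)^β) * T := by rw [hT]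
  calc ∫⁻ χ : E3, f χ ≤ _ := step
    _ ≤ ENNReal.ofReal ((2:ℝ)^β) * Iα + (ENNReal.ofReal ((2:ℝ)^α) * Iβ +
        (ENNReal.ofReal ((2:ℝ)^α * (2:ℝ)^β) * volume (ball (0:E3) 2) +
          ENNReal.ofReal ((2:ℝ)^β) * T)) := by
        gcongr
    _ = _ := by ring

lemma chemin_meas_kernel (a b : ℝ) (ξ : E3) :
    Measurable (fun χ : E3 => ENNReal.ofReal (‖χ‖ ^ a * ‖ξ - χ‖ ^ b)) := by
  have hsub : Measurable (fun χ : E3 => ξ - χ) := measurable_const.sub measurable_id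
  fun_prop

lemma chemin_kernel_bound (α β : ℝ) (hα0 : 0 < α) (hα : α < 3) (hβ0 : 0 < β) (hβ : β < 3)
    (hαβ : 3 < α + β) :
    ∃ C0 : ℝ≥0∞, C0 ≠ ⊤ ∧ ∀ ξ : E3, ξ ≠ 0 →
      ∫⁻ χ : E3, ENNReal.ofReal (‖χ‖ ^ (-α) * ‖ξ - χ‖ ^ (-β)) ≤
        C0 * ENNReal.ofReal (‖ξ‖ ^ (3 - (α+β))) := by
  obtain ⟨C0, hC0top, hC0⟩ := chemin_unit_bound α β hα0 hα hβ0 hβ hαβ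
  refine ⟨C0, hC0top, ?_⟩
  intro ξ hξ
  set R : ℝ := ‖ξ‖ with hR
  have hR0 : 0 < R := norm_pos_iff.2 hξ
  set e : E3 := R⁻¹ • ξ with he
  have henorm : ‖e‖ = 1 := by
    rw [he, norm_smul, norm_inv, Real.norm_eq_abs, abs_of_pos hR0, ← hR,
      inv_mul_cancel₀ hR0.ne']
  have hRe : R • e = ξ := by
    rw [he, smul_inv_smul₀ hR0.ne']
  set g : E3 → ℝ≥0∞ := fun χ => ENNReal.ofReal (‖χ‖ ^ (-α) * ‖ξ - χ‖ ^ (-β)) with hg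
  set h : E3 → ℝ≥0∞ := fun x => ENNReal.ofReal (‖x‖ ^ (-α) * ‖e - x‖ ^ (-β)) with hh
  -- pointwise scaling identity
  have hpt : ∀ x : E3, g (R • x) = ENNReal.ofReal (R ^ (-(α+β))) * h x := by
    intro x
    have h1 : ‖R • x‖ = R * ‖x‖ := by
      rw [norm_smul, Real.norm_eq_abs, abs_of_pos hR0]
    have h2 : ξ - R • x = R • (e - x) := by rw [smul_sub, hRe]
    have h3 : ‖ξ - R • x‖ = R * ‖e - x‖ := by
      rw [h2, norm_smul, Real.norm_eq_abs, abs_of_pos hR0]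
    rw [hg, hh]
    simp only [h1, h3]
    rw [← ENNReal.ofReal_mul (by positivity)]
    congr 1
    rw [Real.mul_rpow hR0.le (norm_nonneg _), Real.mul_rpow hR0.le (norm_nonneg _),
      show (-(α+β)) = (-α) + (-β) by ring, Real.rpow_add hR0]
    ring
  -- change of variables
  have hmeas : Measurable g := chemin_meas_kernel (-α) (-β) ξ
  have hmap : ∫⁻ x : E3, g (R • x) = ENNReal.ofReal |((R:ℝ) ^ (3:ℕ))⁻¹| * ∫⁻ χ, g χ := by
    have hmapeq := Measure.map_addHaar_smul (volume : Measure E3) (r := R) hR0.ne'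
    rw [chemin_finrank3] at hmapeq
    calc ∫⁻ x : E3, g (R • x) = ∫⁻ y, g y ∂(Measure.map (fun x : E3 => R • x) volume) :=
          (lintegral_map hmeas (measurable_const_smul R)).symm
      _ = ENNReal.ofReal |((R:ℝ) ^ (3:ℕ))⁻¹| * ∫⁻ χ, g χ := by
          rw [show (fun x : E3 => R • x) = (R • · : E3 → E3) from rfl, hmapeq,
            lintegral_smul_measure, smul_eq_mul]
  have hKe : ∫⁻ x : E3, g (R • x) = ENNReal.ofReal (R ^ (-(α+β))) * ∫⁻ x, h x := by
    rw [lintegral_congr hpt, lintegral_const_mul' _ _ ENNReal.ofReal_ne_top]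
  have habs : |((R:ℝ) ^ (3:ℕ))⁻¹| = R ^ (-(3:ℝ)) := by
    rw [abs_of_pos (by positivity), ← Real.rpow_natCast R 3, ← Real.rpow_neg hR0.le]
    norm_num
  -- combine
  have hKξ : ∫⁻ χ, g χ = ENNReal.ofReal (R ^ (3:ℝ)) * (ENNReal.ofReal (R ^ (-(α+β))) * ∫⁻ x, h x) := by
    have h1 : ENNReal.ofReal (R ^ (3:ℝ)) * ENNReal.ofReal (R ^ (-(3:ℝ))) = 1 := by
      rw [← ENNReal.ofReal_mul (by positivity), ← Real.rpow_add hR0]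
      norm_num
    calc ∫⁻ χ, g χ = (ENNReal.ofReal (R ^ (3:ℝ)) * ENNReal.ofReal (R ^ (-(3:ℝ)))) * ∫⁻ χ, g χ := by
          rw [h1, one_mul]
      _ = ENNReal.ofReal (R ^ (3:ℝ)) * (ENNReal.ofReal (R ^ (-(3:ℝ))) * ∫⁻ χ, g χ) := by ring
      _ = _ := by rw [← habs, ← hmap, hKe]
  calc ∫⁻ χ, g χ ≤ ENNReal.ofReal (R ^ (3:ℝ)) * (ENNReal.ofReal (R ^ (-(α+β))) * C0) := by
        rw [hKξ]
        gcongr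
        exact hC0 e henorm
    _ = C0 * (ENNReal.ofReal (R ^ (3:ℝ)) * ENNReal.ofReal (R ^ (-(α+β)))) := by ring
    _ = C0 * ENNReal.ofReal (R ^ (3 - (α+β))) := by
        rw [← ENNReal.ofReal_mul (by positivity), ← Real.rpow_add hR0]
        congr 2


open MeasureTheory ENNReal

/-- Chemin's product lemma on the Fourier side: with `η = 1/2 + δ`, `η' = s + 1 - δ`,
`η, η' < 3/2`, `η + η' = s + 3/2 > 0`, the (Fourier transform of the) product, i.e.
the convolution `H` of the Fourier transforms `F, G`, has finite `Ḣˢ` norm bounded by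
`C (‖f‖_{Ḣ^η} ‖g‖_{Ḣ^{η'}} + ‖f‖_{Ḣ^{η'}} ‖g‖_{Ḣ^η})`. -/
theorem stmt15 (δ s : ℝ) (hδ0 : 0 < δ) (hδ1 : δ < 1) (hs : 1 / 2 < s)
    (hη' : s + 1 - δ < 3 / 2) :
    ∃ C : ℝ≥0∞, 0 < C ∧ C ≠ ⊤ ∧
      ∀ F G : EuclideanSpace ℝ (Fin 3) → ℂ, Measurable F → Measurable G →
        (∫⁻ ξ, ENNReal.ofReal (‖ξ‖ ^ (2 * (1 / 2 + δ))) * (‖F ξ‖₊ : ℝ≥0∞) ^ 2) ≠ ⊤ →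
        (∫⁻ ξ, ENNReal.ofReal (‖ξ‖ ^ (2 * (s + 1 - δ))) * (‖F ξ‖₊ : ℝ≥0∞) ^ 2) ≠ ⊤ →
        (∫⁻ ξ, ENNReal.ofReal (‖ξ‖ ^ (2 * (1 / 2 + δ))) * (‖G ξ‖₊ : ℝ≥0∞) ^ 2) ≠ ⊤ →
        (∫⁻ ξ, ENNReal.ofReal (‖ξ‖ ^ (2 * (s + 1 - δ))) * (‖G ξ‖₊ : ℝ≥0∞) ^ 2) ≠ ⊤ →
        (∫⁻ ξ, ENNReal.ofReal (‖ξ‖ ^ (2 * s)) *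
            (‖∫ χ, F χ * G (ξ - χ)‖₊ : ℝ≥0∞) ^ 2) ≠ ⊤ ∧
        (∫⁻ ξ, ENNReal.ofReal (‖ξ‖ ^ (2 * s)) *
            (‖∫ χ, F χ * G (ξ - χ)‖₊ : ℝ≥0∞) ^ 2) ^ (1 / 2 : ℝ) ≤
          C * ((∫⁻ ξ, ENNReal.ofReal (‖ξ‖ ^ (2 * (1 / 2 + δ))) *
                  (‖F ξ‖₊ : ℝ≥0∞) ^ 2) ^ (1 / 2 : ℝ) *
                (∫⁻ ξ, ENNReal.ofReal (‖ξ‖ ^ (2 * (s + 1 - δ))) *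
                  (‖G ξ‖₊ : ℝ≥0∞) ^ 2) ^ (1 / 2 : ℝ) +
              (∫⁻ ξ, ENNReal.ofReal (‖ξ‖ ^ (2 * (s + 1 - δ))) *
                  (‖F ξ‖₊ : ℝ≥0∞) ^ 2) ^ (1 / 2 : ℝ) *
                (∫⁻ ξ, ENNReal.ofReal (‖ξ‖ ^ (2 * (1 / 2 + δ))) *
                  (‖G ξ‖₊ : ℝ≥0∞) ^ 2) ^ (1 / 2 : ℝ)) := by
  have hη0 : (0:ℝ) < 1/2 + δ := by linarith
  have hη'0 : (0:ℝ) < s + 1 - δ := by linarith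
  obtain ⟨C0, hC0top, hker⟩ := chemin_kernel_bound (2*(1/2+δ)) (2*(s+1-δ))
    (by linarith) (by linarith) (by linarith) (by linarith) (by linarith)
  refine ⟨C0 ^ (1/2:ℝ) + 1, ?_, ?_, ?_⟩
  · exact lt_of_lt_of_le zero_lt_one le_add_self
  · exact ENNReal.add_ne_top.2 ⟨ENNReal.rpow_ne_top_of_nonneg (by norm_num) hC0top, one_ne_top⟩
  intro F G hF hG hF1 hF2 hG1 hG2
  -- weight functions
  set w1 : E3 → ℝ≥0∞ := fun χ => ENNReal.ofReal (‖χ‖ ^ (2 * (1/2 + δ))) * (‖F χ‖₊ : ℝ≥0∞) ^ 2 with hw1def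
  set w2 : E3 → ℝ≥0∞ := fun y => ENNReal.ofReal (‖y‖ ^ (2 * (s + 1 - δ))) * (‖G y‖₊ : ℝ≥0∞) ^ 2 with hw2def
  have hw1meas : Measurable w1 := by
    refine Measurable.mul (f := fun χ => ENNReal.ofReal (‖χ‖ ^ (2 * (1/2 + δ))))
      (g := fun χ => (‖F χ‖₊ : ℝ≥0∞) ^ 2) ?_ ?_
    · fun_prop
    · exact ((hF.nnnorm).coe_nnreal_ennreal).pow_const 2
  have hw2meas : Measurable w2 := by
    refine Measurable.mul (f := fun y => ENNReal.ofReal (‖y‖ ^ (2 * (s + 1 - δ))))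
      (g := fun y => (‖G y‖₊ : ℝ≥0∞) ^ 2) ?_ ?_
    · fun_prop
    · exact ((hG.nnnorm).coe_nnreal_ennreal).pow_const 2
  -- key pointwise estimate
  have key : ∀ ξ : E3, ξ ≠ 0 →
      ENNReal.ofReal (‖ξ‖ ^ (2 * s)) * (‖∫ χ, F χ * G (ξ - χ)‖₊ : ℝ≥0∞) ^ 2 ≤
        C0 * ∫⁻ χ, w1 χ * w2 (ξ - χ) := by
    intro ξ hξ
    have hsq : ∀ (x : ℝ), 0 ≤ x → ∀ (c : ℝ), (x ^ c) ^ (2:ℕ) = x ^ (2*c) := by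
      intro x hx c
      rw [← Real.rpow_natCast (x ^ c) 2, ← Real.rpow_mul hx]
      congr 1
      push_cast; ring
    have hsqneg : ∀ (x : ℝ), 0 ≤ x → ∀ (c : ℝ), (x ^ (-c)) ^ (2:ℕ) = x ^ (-(2*c)) := by
      intro x hx c
      rw [← Real.rpow_natCast (x ^ (-c)) 2, ← Real.rpow_mul hx]
      congr 1
      push_cast; ring
    set a : E3 → ℝ≥0∞ := fun χ =>
      ENNReal.ofReal (‖χ‖ ^ (1/2 + δ) * ‖ξ - χ‖ ^ (s + 1 - δ)) *
        ((‖F χ‖₊ : ℝ≥0∞) * (‖G (ξ - χ)‖₊ : ℝ≥0∞)) with hadef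
    set b : E3 → ℝ≥0∞ := fun χ =>
      ENNReal.ofReal (‖χ‖ ^ (-(1/2 + δ)) * ‖ξ - χ‖ ^ (-(s + 1 - δ))) with hbdef
    have hH : (‖∫ χ, F χ * G (ξ - χ)‖₊ : ℝ≥0∞) ≤
        ∫⁻ χ, (‖F χ‖₊ : ℝ≥0∞) * (‖G (ξ - χ)‖₊ : ℝ≥0∞) := by
      refine le_trans (enorm_integral_le_lintegral_enorm _) (le_of_eq ?_)
      apply lintegral_congr
      intro χ
      show ((‖F χ * G (ξ - χ)‖₊ : NNReal) : ℝ≥0∞) = _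
      rw [nnnorm_mul, ENNReal.coe_mul]
    have hnull : volume ({0, ξ} : Set E3) = 0 :=
      Set.Finite.measure_zero (by simp) volume
    have hab : ∀ᵐ χ : E3, (‖F χ‖₊ : ℝ≥0∞) * (‖G (ξ - χ)‖₊ : ℝ≥0∞) = a χ * b χ := by
      rw [ae_iff]
      apply measure_mono_null _ hnull
      intro χ hχ
      simp only [Set.mem_setOf_eq] at hχ
      by_contra hmem
      apply hχ
      simp only [Set.mem_insert_iff, Set.mem_singleton_iff] at hmem
      push_neg at hmem
      obtain ⟨h0, hxi⟩ := hmem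
      have hx : 0 < ‖χ‖ := norm_pos_iff.2 h0
      have hy : 0 < ‖ξ - χ‖ := by
        rw [norm_pos_iff, sub_ne_zero]
        exact fun h => hxi h.symm
      have hw : (‖χ‖ ^ ((1:ℝ)/2 + δ) * ‖ξ - χ‖ ^ (s + 1 - δ)) *
          (‖χ‖ ^ (-((1:ℝ)/2 + δ)) * ‖ξ - χ‖ ^ (-(s + 1 - δ))) = 1 := by
        rw [mul_mul_mul_comm, ← Real.rpow_add hx, ← Real.rpow_add hy,
          show (1:ℝ)/2 + δ + -((1:ℝ)/2 + δ) = 0 by ring,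
          show s + 1 - δ + -(s + 1 - δ) = 0 by ring, Real.rpow_zero, Real.rpow_zero, mul_one]
      rw [hadef, hbdef]
      show (‖F χ‖₊ : ℝ≥0∞) * (‖G (ξ - χ)‖₊ : ℝ≥0∞) = _
      calc (‖F χ‖₊ : ℝ≥0∞) * (‖G (ξ - χ)‖₊ : ℝ≥0∞)
          = ENNReal.ofReal ((‖χ‖ ^ ((1:ℝ)/2 + δ) * ‖ξ - χ‖ ^ (s + 1 - δ)) *
              (‖χ‖ ^ (-((1:ℝ)/2 + δ)) * ‖ξ - χ‖ ^ (-(s + 1 - δ)))) *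
              ((‖F χ‖₊ : ℝ≥0∞) * (‖G (ξ - χ)‖₊ : ℝ≥0∞)) := by
            rw [hw, ENNReal.ofReal_one, one_mul]
        _ = _ := by
            rw [ENNReal.ofReal_mul (by positivity)]
            ring
    have hameas : AEMeasurable a volume := by
      apply Measurable.aemeasurable
      have hsub : Measurable (fun χ : E3 => ξ - χ) := measurable_const.sub measurable_id
      refine Measurable.mul
        (f := fun χ => ENNReal.ofReal (‖χ‖ ^ (1/2 + δ) * ‖ξ - χ‖ ^ (s + 1 - δ)))
        (g := fun χ => (‖F χ‖₊ : ℝ≥0∞) * (‖G (ξ - χ)‖₊ : ℝ≥0∞)) ?_ ?_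
      · fun_prop
      · exact (hF.nnnorm.coe_nnreal_ennreal).mul
          ((hG.comp hsub).nnnorm.coe_nnreal_ennreal)
    have hbmeas : AEMeasurable b volume := by
      apply Measurable.aemeasurable
      have hsub : Measurable (fun χ : E3 => ξ - χ) := measurable_const.sub measurable_id
      fun_prop
    have hconj : (2:ℝ).HolderConjugate 2 := Real.HolderConjugate.two_two
    have hCS := ENNReal.lintegral_mul_le_Lp_mul_Lq volume hconj hameas hbmeas
    have ha2 : ∫⁻ χ, a χ ^ (2:ℝ) = ∫⁻ χ, w1 χ * w2 (ξ - χ) := by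
      apply lintegral_congr
      intro χ
      rw [hadef, hw1def, hw2def]
      show (ENNReal.ofReal (‖χ‖ ^ ((1:ℝ)/2 + δ) * ‖ξ - χ‖ ^ (s + 1 - δ)) *
        ((‖F χ‖₊ : ℝ≥0∞) * (‖G (ξ - χ)‖₊ : ℝ≥0∞))) ^ (2:ℝ) = _
      rw [ENNReal.rpow_two, mul_pow,
        ← ENNReal.ofReal_pow (by positivity),
        mul_pow (‖χ‖ ^ ((1:ℝ)/2 + δ)) (‖ξ - χ‖ ^ (s + 1 - δ)) 2,
        hsq _ (norm_nonneg _) ((1:ℝ)/2 + δ), hsq _ (norm_nonneg _) (s + 1 - δ),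
        ENNReal.ofReal_mul (by positivity), mul_pow]
      ring
    have hb2 : ∫⁻ χ, b χ ^ (2:ℝ) =
        ∫⁻ χ, ENNReal.ofReal (‖χ‖ ^ (-(2*(1/2 + δ))) * ‖ξ - χ‖ ^ (-(2*(s + 1 - δ)))) := by
      apply lintegral_congr
      intro χ
      rw [hbdef]
      show (ENNReal.ofReal (‖χ‖ ^ (-((1:ℝ)/2 + δ)) * ‖ξ - χ‖ ^ (-(s + 1 - δ)))) ^ (2:ℝ) = _
      rw [ENNReal.rpow_two,
        ← ENNReal.ofReal_pow (by positivity),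
        mul_pow (‖χ‖ ^ (-((1:ℝ)/2 + δ))) (‖ξ - χ‖ ^ (-(s + 1 - δ))) 2,
        hsqneg _ (norm_nonneg _) ((1:ℝ)/2 + δ), hsqneg _ (norm_nonneg _) (s + 1 - δ)]
    have hkerb := hker ξ hξ
    have hexp : (3:ℝ) - (2*(1/2+δ) + 2*(s+1-δ)) = -(2*s) := by ring
    rw [hexp] at hkerb
    have hCS2 : (∫⁻ χ, (‖F χ‖₊ : ℝ≥0∞) * (‖G (ξ - χ)‖₊ : ℝ≥0∞)) ^ (2:ℕ) ≤
        (∫⁻ χ, w1 χ * w2 (ξ - χ)) * (C0 * ENNReal.ofReal (‖ξ‖ ^ (-(2*s)))) := by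
      calc (∫⁻ χ, (‖F χ‖₊ : ℝ≥0∞) * (‖G (ξ - χ)‖₊ : ℝ≥0∞)) ^ (2:ℕ)
          = (∫⁻ χ, a χ * b χ) ^ (2:ℕ) := by rw [lintegral_congr_ae hab]
        _ = (∫⁻ χ, (a * b) χ) ^ (2:ℕ) := rfl
        _ ≤ ((∫⁻ χ, a χ ^ (2:ℝ)) ^ (1/(2:ℝ)) * (∫⁻ χ, b χ ^ (2:ℝ)) ^ (1/(2:ℝ))) ^ (2:ℕ) := by
            gcongr
        _ = (∫⁻ χ, a χ ^ (2:ℝ)) * (∫⁻ χ, b χ ^ (2:ℝ)) := by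
            rw [mul_pow, ← ENNReal.rpow_natCast ((∫⁻ χ, a χ ^ (2:ℝ)) ^ (1/(2:ℝ))) 2,
              ← ENNReal.rpow_natCast ((∫⁻ χ, b χ ^ (2:ℝ)) ^ (1/(2:ℝ))) 2,
              ← ENNReal.rpow_mul, ← ENNReal.rpow_mul]
            norm_num
        _ ≤ (∫⁻ χ, w1 χ * w2 (ξ - χ)) * (C0 * ENNReal.ofReal (‖ξ‖ ^ (-(2*s)))) := by
            rw [ha2, hb2]
            exact mul_le_mul_right hkerb _
    have hone : ENNReal.ofReal (‖ξ‖ ^ (2*s)) * ENNReal.ofReal (‖ξ‖ ^ (-(2*s))) = 1 := by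
      have hx : 0 < ‖ξ‖ := norm_pos_iff.2 hξ
      rw [← ENNReal.ofReal_mul (by positivity), ← Real.rpow_add hx]
      norm_num
    calc ENNReal.ofReal (‖ξ‖ ^ (2 * s)) * (‖∫ χ, F χ * G (ξ - χ)‖₊ : ℝ≥0∞) ^ 2
        ≤ ENNReal.ofReal (‖ξ‖ ^ (2 * s)) *
            ((∫⁻ χ, (‖F χ‖₊ : ℝ≥0∞) * (‖G (ξ - χ)‖₊ : ℝ≥0∞)) ^ (2:ℕ)) := by
          gcongr
      _ ≤ ENNReal.ofReal (‖ξ‖ ^ (2 * s)) *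
            ((∫⁻ χ, w1 χ * w2 (ξ - χ)) * (C0 * ENNReal.ofReal (‖ξ‖ ^ (-(2*s))))) := by
          gcongr
      _ = (C0 * ∫⁻ χ, w1 χ * w2 (ξ - χ)) *
            (ENNReal.ofReal (‖ξ‖ ^ (2*s)) * ENNReal.ofReal (‖ξ‖ ^ (-(2*s)))) := by ring
      _ = C0 * ∫⁻ χ, w1 χ * w2 (ξ - χ) := by rw [hone, mul_one]
  -- a.e. pointwise bound and integration
  have hae : ∀ᵐ ξ : E3, ξ ≠ (0:E3) := by
    rw [ae_iff]
    simp only [not_not, Set.setOf_eq_eq_singleton]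
    exact measure_singleton 0
  have hmain : (∫⁻ ξ, ENNReal.ofReal (‖ξ‖ ^ (2 * s)) *
      (‖∫ χ, F χ * G (ξ - χ)‖₊ : ℝ≥0∞) ^ 2) ≤
      C0 * ((∫⁻ χ, w1 χ) * ∫⁻ y, w2 y) := by
    have swap : ∫⁻ ξ, ∫⁻ χ, w1 χ * w2 (ξ - χ) = (∫⁻ χ, w1 χ) * ∫⁻ y, w2 y := by
      rw [lintegral_lintegral_swap (((hw1meas.comp measurable_snd).mul
        (hw2meas.comp (measurable_fst.sub measurable_snd))).aemeasurable)]
      calc ∫⁻ χ, ∫⁻ ξ, w1 χ * w2 (ξ - χ) = ∫⁻ χ, w1 χ * ∫⁻ ξ, w2 (ξ - χ) := by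
            apply lintegral_congr
            intro χ
            exact lintegral_const_mul' _ _
              (ENNReal.mul_ne_top ENNReal.ofReal_ne_top (pow_ne_top coe_ne_top))
        _ = ∫⁻ χ, w1 χ * ∫⁻ y, w2 y := by
            apply lintegral_congr
            intro χ
            rw [lintegral_sub_right_eq_self w2 χ]
        _ = (∫⁻ χ, w1 χ) * ∫⁻ y, w2 y := lintegral_mul_const' _ _ hG2
    calc (∫⁻ ξ, ENNReal.ofReal (‖ξ‖ ^ (2 * s)) * (‖∫ χ, F χ * G (ξ - χ)‖₊ : ℝ≥0∞) ^ 2)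
        ≤ ∫⁻ ξ, C0 * ∫⁻ χ, w1 χ * w2 (ξ - χ) := by
          apply lintegral_mono_ae
          filter_upwards [hae] with ξ hξ using key ξ hξ
      _ = C0 * ∫⁻ ξ, ∫⁻ χ, w1 χ * w2 (ξ - χ) := lintegral_const_mul' _ _ hC0top
      _ = C0 * ((∫⁻ χ, w1 χ) * ∫⁻ y, w2 y) := by rw [swap]
  have hfin : C0 * ((∫⁻ χ, w1 χ) * ∫⁻ y, w2 y) ≠ ⊤ :=
    ENNReal.mul_ne_top hC0top (ENNReal.mul_ne_top hF1 hG2)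
  constructor
  · exact ne_top_of_le_ne_top hfin hmain
  calc (∫⁻ ξ, ENNReal.ofReal (‖ξ‖ ^ (2 * s)) *
        (‖∫ χ, F χ * G (ξ - χ)‖₊ : ℝ≥0∞) ^ 2) ^ (1/2:ℝ)
      ≤ (C0 * ((∫⁻ χ, w1 χ) * ∫⁻ y, w2 y)) ^ (1/2:ℝ) :=
        ENNReal.rpow_le_rpow hmain (by norm_num)
    _ = C0 ^ (1/2:ℝ) * ((∫⁻ χ, w1 χ) ^ (1/2:ℝ) * (∫⁻ y, w2 y) ^ (1/2:ℝ)) := by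
        rw [ENNReal.mul_rpow_of_nonneg _ _ (by norm_num : (0:ℝ) ≤ 1/2),
          ENNReal.mul_rpow_of_nonneg _ _ (by norm_num : (0:ℝ) ≤ 1/2)]
    _ ≤ (C0 ^ (1/2:ℝ) + 1) * ((∫⁻ χ, w1 χ) ^ (1/2:ℝ) * (∫⁻ y, w2 y) ^ (1/2:ℝ) +
          (∫⁻ ξ, ENNReal.ofReal (‖ξ‖ ^ (2 * (s + 1 - δ))) *
              (‖F ξ‖₊ : ℝ≥0∞) ^ 2) ^ (1/2:ℝ) *
            (∫⁻ ξ, ENNReal.ofReal (‖ξ‖ ^ (2 * (1/2 + δ))) *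
              (‖G ξ‖₊ : ℝ≥0∞) ^ 2) ^ (1/2:ℝ)) :=
        mul_le_mul' le_self_add le_self_add
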